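/- arXiv:1601.05825 — 2 statements merged into one kernel-verified Lean document; each statement's English description precedes it below -/
import Mathlib

section
/- If X is a Banach space with property (K) and the separable complementation property, then X contains no subspace isomorphic to c₀. -/
open NormedSpace Filter

/-- A set is weakly compact if it is compact in the weak topology. -/
def IsWeaklyCompact {X : Type*} [NormedAddCommGroup X] [NormedSpace ℝ X] (L : Set X) : Prop :=
  IsCompact (toWeakSpace ℝ X '' L)

/-- Weak* convergence of a sequence of functionals. -/
def WStarTendsto {X : Type*} [NormedAddCommGroup X] [NormedSpace ℝ X]
    (f : ℕ → StrongDual ℝ X) (g : StrongDual ℝ X) : Prop :=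
  ∀ x : X, Tendsto (fun n => f n x) atTop (nhds (g x))

/-- Convergence in the Mackey topology μ(X*,X): uniform convergence on every
weakly compact subset of X. -/
def MackeyTendsto {X : Type*} [NormedAddCommGroup X] [NormedSpace ℝ X]
    (f : ℕ → StrongDual ℝ X) (g : StrongDual ℝ X) : Prop :=
  ∀ L : Set X, IsWeaklyCompact L → ∀ ε : ℝ, 0 < ε →
    ∀ᶠ n in atTop, ∀ x ∈ L, |f n x - g x| < ε

/-- `y` is a convex block subsequence of `x`. -/
def IsConvexBlock {E : Type*} [AddCommGroup E] [Module ℝ E] (x y : ℕ → E) : Prop :=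
  ∃ (I : ℕ → Finset ℕ) (a : ℕ → ℝ),
    (∀ k, (I k).Nonempty) ∧
    (∀ k m m', m ∈ I k → m' ∈ I (k + 1) → m < m') ∧
    (∀ n, 0 ≤ a n) ∧
    (∀ k, ∑ n ∈ I k, a n = 1) ∧
    (∀ k, y k = ∑ n ∈ I k, a n • x n)

/-- Property (K): every weak*-convergent sequence in the dual admits a convex block
subsequence converging in the Mackey topology. -/
def PropertyK (X : Type*) [NormedAddCommGroup X] [NormedSpace ℝ X] : Prop :=
  ∀ (f : ℕ → StrongDual ℝ X) (g : StrongDual ℝ X), WStarTendsto f g →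
    ∃ (y : ℕ → StrongDual ℝ X) (h : StrongDual ℝ X), IsConvexBlock f y ∧ MackeyTendsto y h

/-- The separable complementation property: every separable subspace is contained in
a complemented separable subspace. -/
def SepComplementationProp (X : Type*) [NormedAddCommGroup X] [NormedSpace ℝ X] : Prop :=
  ∀ S : Submodule ℝ X, TopologicalSpace.IsSeparable (S : Set X) →
    ∃ Z : Submodule ℝ X, S ≤ Z ∧ TopologicalSpace.IsSeparable (Z : Set X) ∧
      ∃ P : X →L[ℝ] X, (∀ x, P x ∈ Z) ∧ ∀ z ∈ Z, P z = z

/-!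
Suppose `T : c₀ → X` is an isomorphic embedding. The separable complementation property gives a
separable subspace `Z ⊇ T(c₀)` and a projection `P` of `X` onto `Z`. Hahn–Banach extensions `φₘ` of
the coordinate functionals of `c₀` are uniformly bounded, so by the sequential Banach–Alaoglu
theorem in `Z` some subsequence `φ_{n_j} ∘ P` is weak*-convergent, and property (K) yields convex
blocks `y_k = ∑_{j ∈ I_k} a_j φ_{n_j} ∘ P` converging to some `h` uniformly on weakly compact sets.
Since `φ_{n_j}(T v) = v (n_j) → 0`, `h` vanishes on `T(c₀)`. The block indicators
`s_k = ∑_{j ∈ I_k} e_{n_j}` satisfy `y_k (T s_k) = 1`, while `T s_k → 0` weakly because functionals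
on `c₀` are absolutely summable on the unit vectors; so on the weakly compact set `{0} ∪ {T s_k}`
the convergence `y_k → h` is not uniform.
-/

open TopologicalSpace ZeroAtInfty Topology

namespace ZeroAtInftyContinuousMap

section Eval

variable {α : Type*} [TopologicalSpace α]

theorem norm_apply_le (v : C₀(α, ℝ)) (x : α) : ‖v x‖ ≤ ‖v‖ := by
  rw [← norm_toBCF_eq_norm]
  exact v.toBCF.norm_coe_le_norm x

theorem norm_le_of_forall_norm_apply_le {v : C₀(α, ℝ)} {C : ℝ} (hC : 0 ≤ C)
    (h : ∀ x, ‖v x‖ ≤ C) : ‖v‖ ≤ C := by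
  rw [← norm_toBCF_eq_norm]
  exact (BoundedContinuousFunction.norm_le hC).mpr h

noncomputable def evalCLM (x : α) : C₀(α, ℝ) →L[ℝ] ℝ :=
  LinearMap.mkContinuous
    { toFun := fun v => v x, map_add' := fun _ _ => rfl, map_smul' := fun _ _ => rfl } 1
    fun v => by simpa using norm_apply_le v x

@[simp]
theorem evalCLM_apply (x : α) (v : C₀(α, ℝ)) : evalCLM x v = v x := rfl

theorem norm_evalCLM_le (x : α) : ‖evalCLM x‖ ≤ 1 :=
  LinearMap.mkContinuous_norm_le _ zero_le_one _

end Eval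

noncomputable def single (n : ℕ) : C₀(ℕ, ℝ) where
  toFun := Pi.single n 1
  continuous_toFun := continuous_of_discreteTopology
  zero_at_infty' := by
    rw [cocompact_eq_cofinite]
    exact tendsto_const_nhds.congr'
      ((eventually_cofinite_ne n).mono fun m hm => by simp [hm])

theorem sum_smul_single_apply (s : Finset ℕ) (σ : ℕ → ℝ) (m : ℕ) :
    (∑ k ∈ s, σ k • single k) m = if m ∈ s then σ m else 0 := by
  rw [← evalCLM_apply, map_sum]
  simp [single, Pi.single_apply]

theorem tendsto_apply_atTop (v : C₀(ℕ, ℝ)) : Tendsto v atTop (𝓝 0) := by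
  simpa [cocompact_eq_cofinite, Nat.cofinite_eq_atTop] using zero_at_infty v

theorem tendsto_sum_range_smul_single (v : C₀(ℕ, ℝ)) :
    Tendsto (fun N => ∑ m ∈ Finset.range N, v m • single m) atTop (𝓝 v) := by
  rw [Metric.tendsto_atTop]
  intro ε hε
  obtain ⟨N, hN⟩ := Metric.tendsto_atTop.mp (tendsto_apply_atTop v) (ε / 2) (half_pos hε)
  refine ⟨N, fun M hM => lt_of_le_of_lt ?_ (half_lt_self hε)⟩
  rw [dist_eq_norm]
  refine norm_le_of_forall_norm_apply_le (half_pos hε).le fun m => ?_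
  rw [sub_apply, sum_smul_single_apply]
  split_ifs with hm
  · simpa using (half_pos hε).le
  · simpa [Real.dist_eq] using (hN m (hM.trans (by simpa using hm))).le

theorem dense_span_range_single :
    Dense (Submodule.span ℝ (Set.range single) : Set C₀(ℕ, ℝ)) := fun v =>
  mem_closure_of_tendsto (tendsto_sum_range_smul_single v) <| .of_forall fun _ =>
    Submodule.sum_mem _ fun m _ => Submodule.smul_mem _ _ (Submodule.subset_span ⟨m, rfl⟩)

theorem summable_apply_single (μ : StrongDual ℝ C₀(ℕ, ℝ)) :
    Summable fun m => μ (single m) := by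
  refine summable_abs_iff.mp <|
    summable_of_sum_range_le (c := ‖μ‖) (fun _ => abs_nonneg _) fun N => ?_
  set σ : ℕ → ℝ := fun m => SignType.sign (μ (single m))
  have hσ : ∑ m ∈ Finset.range N, |μ (single m)| = μ (∑ m ∈ Finset.range N, σ m • single m) := by
    simp [σ, map_sum, sign_mul_self]
  have hnorm : ‖∑ m ∈ Finset.range N, σ m • single m‖ ≤ 1 := by
    refine norm_le_of_forall_norm_apply_le zero_le_one fun m => ?_
    rw [sum_smul_single_apply]
    split_ifs
    · simp only [σ]
      rcases SignType.sign (μ (single m)) with _ | _ | _ <;> simp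
    · simp
  calc ∑ m ∈ Finset.range N, |μ (single m)|
      ≤ ‖μ‖ * ‖∑ m ∈ Finset.range N, σ m • single m‖ := by
        rw [hσ]; exact (le_abs_self _).trans (μ.le_opNorm _)
    _ ≤ ‖μ‖ := mul_le_of_le_one_right (norm_nonneg μ) hnorm

end ZeroAtInftyContinuousMap

open ZeroAtInftyContinuousMap

theorem Summable.tendsto_sum_of_forall_le {G : Type*} [AddCommGroup G] [UniformSpace G]
    [IsUniformAddGroup G] {f : ℕ → G} (hf : Summable f) {t : ℕ → Finset ℕ}
    (ht : ∀ k, ∀ m ∈ t k, k ≤ m) : Tendsto (fun k => ∑ m ∈ t k, f m) atTop (𝓝 0) := by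
  intro U hU
  obtain ⟨s, hs⟩ := cauchySeq_finset_iff_sum_vanishing.mp hf.hasSum.cauchySeq U hU
  refine mem_map.mpr (mem_of_superset (eventually_gt_atTop (s.sup id)) fun k hk => ?_)
  refine hs _ (Finset.disjoint_left.mpr fun m hm hms => ?_)
  exact (hk.trans_le (ht k m hm)).not_ge (Finset.le_sup (f := id) hms)

theorem le_of_mem_of_blocks {I : ℕ → Finset ℕ} (hne : ∀ k, (I k).Nonempty)
    (hlt : ∀ k m m', m ∈ I k → m' ∈ I (k + 1) → m < m') : ∀ k, ∀ m ∈ I k, k ≤ m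
  | 0, _, _ => Nat.zero_le _
  | k + 1, m, hm =>
    let ⟨m₀, hm₀⟩ := hne k
    (le_of_mem_of_blocks hne hlt k m₀ hm₀).trans_lt (hlt k m₀ m hm₀ hm)

namespace IsConvexBlock

theorem map {E F : Type*} [AddCommGroup E] [Module ℝ E] [AddCommGroup F] [Module ℝ F]
    {x y : ℕ → E} (hy : IsConvexBlock x y) (L : E →ₗ[ℝ] F) :
    IsConvexBlock (fun n => L (x n)) (fun k => L (y k)) := by
  obtain ⟨I, a, hne, hlt, ha0, ha1, hyI⟩ := hy
  exact ⟨I, a, hne, hlt, ha0, ha1, fun k => by simp [hyI k]⟩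

theorem tendsto {E : Type*} [SeminormedAddCommGroup E] [NormedSpace ℝ E] {x y : ℕ → E}
    (hy : IsConvexBlock x y) {L : E} (hx : Tendsto x atTop (𝓝 L)) :
    Tendsto y atTop (𝓝 L) := by
  obtain ⟨I, a, hne, hlt, ha0, ha1, hyI⟩ := hy
  rw [Metric.tendsto_atTop] at hx ⊢
  intro ε hε
  obtain ⟨N, hN⟩ := hx ε hε
  refine ⟨N, fun k hk => ?_⟩
  rw [hyI k]
  exact (convex_ball L ε).sum_mem (fun n _ => ha0 n) (ha1 k)
    fun n hn => hN n (hk.trans (le_of_mem_of_blocks hne hlt k n hn))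

end IsConvexBlock

section WeakTopology

variable {X : Type*} [NormedAddCommGroup X] [NormedSpace ℝ X]

theorem MackeyTendsto.wStarTendsto {f : ℕ → StrongDual ℝ X} {g : StrongDual ℝ X}
    (h : MackeyTendsto f g) : WStarTendsto f g := fun x =>
  Metric.tendsto_atTop.mpr fun ε hε =>
    let ⟨N, hN⟩ := eventually_atTop.mp (h {x} (by simp [IsWeaklyCompact]) ε hε)
    ⟨N, fun n hn => hN n hn x rfl⟩

theorem isWeaklyCompact_insert_range {x : ℕ → X} {x₀ : X}
    (hx : ∀ φ : StrongDual ℝ X, Tendsto (fun k => φ (x k)) atTop (𝓝 (φ x₀))) :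
    IsWeaklyCompact (insert x₀ (Set.range x)) := by
  rw [IsWeaklyCompact, Set.image_insert_eq, ← Set.range_comp]
  refine Tendsto.isCompact_insert_range ?_
  exact (WeakBilin.tendsto_iff_forall_eval_tendsto _
    (separatingDual_iff_injective.mp inferInstance)).mpr hx

theorem exists_strictMono_wStarTendsto [SeparableSpace X] {f : ℕ → StrongDual ℝ X} {C : ℝ}
    (hf : ∀ n, ‖f n‖ ≤ C) : ∃ n : ℕ → ℕ, StrictMono n ∧ ∃ g, WStarTendsto (f ∘ n) g := by
  obtain ⟨g, -, n, hn, hg⟩ := WeakDual.isSeqCompact_closedBall ℝ X 0 C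
    (x := fun k => StrongDual.toWeakDual (f k)) fun k => by simpa using hf k
  exact ⟨n, hn, WeakDual.toStrongDual g, fun x =>
    (tendsto_iff_forall_eval_tendsto_topDualPairing.mp hg) x⟩

end WeakTopology

theorem exists_dual_comp_eq_of_le_norm {E X : Type*} [NormedAddCommGroup E] [NormedSpace ℝ E]
    [NormedAddCommGroup X] [NormedSpace ℝ X] (T : E →L[ℝ] X) {c : ℝ} (hc : 0 < c)
    (hT : ∀ v, c * ‖v‖ ≤ ‖T v‖) (ℓ : StrongDual ℝ E) :
    ∃ φ : StrongDual ℝ X, (∀ v, φ (T v) = ℓ v) ∧ ‖φ‖ ≤ ‖ℓ‖ / c := by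
  have hinj : Function.Injective (T : E →ₗ[ℝ] X) :=
    (injective_iff_map_eq_zero _).mpr fun v hv => norm_le_zero_iff.mp <|
      nonpos_of_mul_nonpos_right (by simpa [show T v = 0 from hv] using hT v) hc
  let e := LinearEquiv.ofInjective (T : E →ₗ[ℝ] X) hinj
  have he : ∀ v, (e v : X) = T v := LinearEquiv.ofInjective_apply _
  have hbound : ∀ x, ‖ℓ (e.symm x)‖ ≤ ‖ℓ‖ / c * ‖x‖ := fun x => by
    have hx : c * ‖e.symm x‖ ≤ ‖x‖ := by
      simpa [← he] using hT (e.symm x)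
    calc ‖ℓ (e.symm x)‖ ≤ ‖ℓ‖ * ‖e.symm x‖ := ℓ.le_opNorm _
      _ ≤ ‖ℓ‖ * (‖x‖ / c) := by gcongr; rwa [le_div_iff₀' hc]
      _ = ‖ℓ‖ / c * ‖x‖ := by ring
  obtain ⟨φ, hφ, hφn⟩ := exists_extension_norm_eq _
    (LinearMap.mkContinuous ((ℓ : E →ₗ[ℝ] ℝ).comp e.symm.toLinearMap) _ hbound)
  refine ⟨φ, fun v => ?_, hφn ▸ LinearMap.mkContinuous_norm_le _ (by positivity) _⟩
  simpa [he] using hφ (e v)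

theorem not_mackeyTendsto_of_isConvexBlock {X : Type*} [NormedAddCommGroup X] [NormedSpace ℝ X]
    (T : C₀(ℕ, ℝ) →L[ℝ] X) {F y : ℕ → StrongDual ℝ X} {n : ℕ → ℕ} (hn : StrictMono n)
    (hFT : ∀ j v, F j (T v) = v (n j)) (hy : IsConvexBlock F y) (h : StrongDual ℝ X) :
    ¬ MackeyTendsto y h := by
  intro hM
  have hhT : ∀ v, h (T v) = 0 := fun v =>
    tendsto_nhds_unique (hM.wStarTendsto (T v))
      ((hy.map (ContinuousLinearMap.apply ℝ ℝ (T v)).toLinearMap).tendsto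
        (by simpa [hFT, Function.comp_def] using (tendsto_apply_atTop v).comp hn.tendsto_atTop))
  obtain ⟨I, a, hne, hlt, ha0, ha1, hyI⟩ := hy
  let s : ℕ → C₀(ℕ, ℝ) := fun k => ∑ m ∈ (I k).image n, single m
  have hs : ∀ k, ∀ j ∈ I k, s k (n j) = 1 := fun k j hj => by
    simpa [s, Finset.mem_image_of_mem n hj] using sum_smul_single_apply ((I k).image n) 1 (n j)
  have hys : ∀ k, y k (T (s k)) = 1 := fun k => by
    rw [hyI k, ← ha1 k, sum_apply]
    exact Finset.sum_congr rfl fun j hj => by simp [hFT, hs k j hj]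
  have hle : ∀ k, ∀ m ∈ (I k).image n, k ≤ m := fun k m hm => by
    obtain ⟨j, hj, rfl⟩ := Finset.mem_image.mp hm
    exact (le_of_mem_of_blocks hne hlt k j hj).trans hn.le_apply
  have hws : ∀ ψ : StrongDual ℝ X, Tendsto (fun k => ψ (T (s k))) atTop (𝓝 (ψ 0)) := fun ψ => by
    simpa [s, map_sum] using (summable_apply_single (ψ.comp T)).tendsto_sum_of_forall_le hle
  obtain ⟨k, hk⟩ := (hM _ (isWeaklyCompact_insert_range hws) 1 one_pos).exists
  simpa [hys, hhT] using hk (T (s k)) (Set.mem_insert_of_mem _ ⟨k, rfl⟩)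

theorem propertyK_scp_no_c0_general (X : Type*) [NormedAddCommGroup X]
    [NormedSpace ℝ X] (hK : PropertyK X)
    (hscp : SepComplementationProp X) :
    ¬ ∃ (T : ZeroAtInftyContinuousMap ℕ ℝ →L[ℝ] X) (c : ℝ), 0 < c ∧
      ∀ v, c * ‖v‖ ≤ ‖T v‖ := by
  rintro ⟨T, c, hc, hT⟩
  obtain ⟨Z, hSZ, hZ, P, hPZ, hPfix⟩ :=
    hscp _ (Set.countable_range fun m => T (single m)).isSeparable.span
  have hPT : ∀ v, P (T v) = T v := DFunLike.congr_fun <|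
    (ContinuousLinearMap.ext_on (f := P.comp T) dense_span_range_single) <| by
      rintro _ ⟨m, rfl⟩
      exact hPfix _ (hSZ (Submodule.subset_span ⟨m, rfl⟩))
  choose φ hφT hφ using fun m => exists_dual_comp_eq_of_le_norm T hc hT (evalCLM m)
  have : SeparableSpace Z := hZ.separableSpace
  have hφZ : ∀ m, ‖(φ m).comp Z.subtypeL‖ ≤ 1 / c := fun m =>
    calc ‖(φ m).comp Z.subtypeL‖ ≤ ‖φ m‖ := by
          simpa using (φ m).opNorm_comp_le Z.subtypeL |>.trans
            (mul_le_of_le_one_right (norm_nonneg _) Z.norm_subtypeL_le)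
      _ ≤ 1 / c := (hφ m).trans (by gcongr; exact norm_evalCLM_le m)
  obtain ⟨n, hn, g, hg⟩ := exists_strictMono_wStarTendsto hφZ
  let Q := P.codRestrict Z hPZ
  obtain ⟨y, h, hy, hM⟩ := hK (fun j => (φ (n j)).comp P) (g.comp Q) fun x => hg (Q x)
  exact not_mackeyTendsto_of_isConvexBlock T hn (fun j v => by simp [hPT, hφT]) hy h hM

theorem propertyK_scp_no_c0 (X : Type*) [NormedAddCommGroup X]
    [NormedSpace ℝ X] [CompleteSpace X] (hK : PropertyK X)
    (hscp : SepComplementationProp X) :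
    ¬ ∃ (T : ZeroAtInftyContinuousMap ℕ ℝ →L[ℝ] X) (c : ℝ), 0 < c ∧
      ∀ v, c * ‖v‖ ≤ ‖T v‖ :=
  propertyK_scp_no_c0_general X hK hscp
end

section
/- Let X be a Banach space, L ⊆ X a weakly compact set, and (x_n*) a weak*-convergent sequence in X*. Then there is a convex block subsequence of (x_n*) which converges uniformly on L. -/
/-!
The `x n` are bounded by Banach–Steinhaus and `x n - g → 0` pointwise. The key tool is Simons'
inequality, which only needs every functional to attain its supremum on `L`: choose `uₙ` in the
closed convex hull of the `n`-th tail greedily, each nearly minimising the supremum on `L` of the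
next dyadic partial sum. Then `w = ∑ 2⁻⁽ⁿ⁺¹⁾ uₙ` attains its supremum at some `b ∈ L`, and every
tail `zₙ` of this series, a point of the `n`-th hull, satisfies `zₙ b ≥ w b - ε`; as the sequence
tends to `0` at `b`, this gives `w ≤ ε` on `L`. Doing the same for the negatives of such
combinations makes them small in absolute value. Since `L` is norm-bounded, finite convex
combinations of any tail are then uniformly small on `L`, and taking them on successive blocks of
indices gives the convex block subsequence.
-/

open NormedSpace Filter

open Set Topology
open scoped Pointwise

section ConvexCombinations

theorem exists_weights_of_mem_convexHull_image {ι E : Type*} [AddCommGroup E] [Module ℝ E]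
    {x : ι → E} {s : Finset ι} {y : E} (hy : y ∈ convexHull ℝ (x '' s)) :
    ∃ c : ι → ℝ, (∀ i, 0 ≤ c i) ∧ ∑ i ∈ s, c i = 1 ∧ y = ∑ i ∈ s, c i • x i := by
  classical
  suffices convexHull ℝ (x '' s) ⊆
      {y | ∃ c : ι → ℝ, (∀ i, 0 ≤ c i) ∧ ∑ i ∈ s, c i = 1 ∧ y = ∑ i ∈ s, c i • x i} from this hy
  refine convexHull_min ?_ ?_
  · rintro _ ⟨i, hi, rfl⟩
    refine ⟨fun j => if j = i then 1 else 0, fun j => by dsimp only; split_ifs <;> norm_num,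
      ?_, ?_⟩ <;> simp [Finset.mem_coe.1 hi]
  · rintro _ ⟨c₁, hc₁, hs₁, rfl⟩ _ ⟨c₂, hc₂, hs₂, rfl⟩ a b ha hb hab
    refine ⟨fun i => a * c₁ i + b * c₂ i,
      fun i => add_nonneg (mul_nonneg ha (hc₁ i)) (mul_nonneg hb (hc₂ i)), ?_, ?_⟩
    · simp only [Finset.sum_add_distrib, ← Finset.mul_sum, hs₁, hs₂, mul_one, hab]
    · simp only [Finset.smul_sum, add_smul, Finset.sum_add_distrib, mul_smul]

theorem exists_lt_mem_convexHull_image_Ico {E : Type*} [AddCommGroup E] [Module ℝ E]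
    {x : ℕ → E} {n : ℕ} {y : E} (hy : y ∈ convexHull ℝ (x '' Ici n)) :
    ∃ m > n, y ∈ convexHull ℝ (x '' Ico n m) := by
  have hmono : Monotone fun m => convexHull ℝ (x '' Ico n m) := fun m m' h =>
    convexHull_mono (image_mono (Ico_subset_Ico_right h))
  have hsub : convexHull ℝ (x '' Ici n) ⊆ ⋃ m, convexHull ℝ (x '' Ico n m) := by
    refine convexHull_min ?_ (hmono.directed_le.convex_iUnion fun m => convex_convexHull ℝ _)
    rintro _ ⟨k, hk, rfl⟩
    exact mem_iUnion.2 ⟨k + 1, subset_convexHull ℝ _ ⟨k, ⟨hk, k.lt_succ_self⟩, rfl⟩⟩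
  obtain ⟨m, hm⟩ := mem_iUnion.1 (hsub hy)
  exact ⟨max m (n + 1), by omega, hmono (le_max_left _ _) hm⟩

theorem isConvexBlock_of_mem_convexHull_Ico {E : Type*} [AddCommGroup E] [Module ℝ E]
    {x y : ℕ → E} {N : ℕ → ℕ} (hN : StrictMono N)
    (hy : ∀ k, y k ∈ convexHull ℝ (x '' Ico (N k) (N (k + 1)))) : IsConvexBlock x y := by
  classical
  set I : ℕ → Finset ℕ := fun k => Finset.Ico (N k) (N (k + 1))
  choose c hc0 hc1 hcy using fun k =>
    exists_weights_of_mem_convexHull_image (x := x) (s := I k) (by simpa [I] using hy k)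
  have hdisj : ∀ {k k' n}, n ∈ I k → n ∈ I k' → k = k' := by
    intro k k' n hk hk'
    simp only [I, Finset.mem_Ico] at hk hk'
    by_contra hne
    rcases lt_or_gt_of_ne hne with h | h <;> linarith [hN.monotone (Nat.succ_le_of_lt h)]
  -- `N k ≥ k`, so the block containing `n` has index at most `n`
  set a : ℕ → ℝ := fun n => ∑ k ∈ Finset.range (n + 1), if n ∈ I k then c k n else 0
  have ha : ∀ k, ∀ n ∈ I k, a n = c k n := by
    intro k n hn
    have hkn : k ≤ n := (hN.id_le k).trans (Finset.mem_Ico.1 hn).1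
    simp only [a]
    rw [Finset.sum_eq_single_of_mem k (Finset.mem_range.2 (by omega)), if_pos hn]
    intro k' _ hk'
    rw [if_neg fun hn' => hk' (hdisj hn' hn)]
  refine ⟨I, a, fun k => Finset.nonempty_Ico.2 (hN k.lt_succ_self), ?_,
    fun n => Finset.sum_nonneg fun k _ => by split_ifs <;> simp [hc0], fun k => ?_, fun k => ?_⟩
  · intro k m m' hm hm'
    exact (Finset.mem_Ico.1 hm).2.trans_le (Finset.mem_Ico.1 hm').1
  · rw [Finset.sum_congr rfl (ha k), hc1]
  · rw [Finset.sum_congr rfl fun n hn => by rw [ha k n hn], hcy]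

theorem Convex.mem_of_hasSum {E : Type*} [AddCommGroup E] [Module ℝ E] [TopologicalSpace E]
    [ContinuousSMul ℝ E] {s : Set E} (hs : Convex ℝ s) (hsc : IsClosed s) {w : ℕ → ℝ}
    {z : ℕ → E} {y : E} (hw : ∀ j, 0 ≤ w j) (hw1 : HasSum w 1) (hz : ∀ j, z j ∈ s)
    (hy : HasSum (fun j => w j • z j) y) : y ∈ s := by
  have hW := hw1.tendsto_sum_nat
  have hcm : Tendsto (fun m => (Finset.range m).centerMass w z) atTop (𝓝 y) := by
    simpa [Finset.centerMass] using (hW.inv₀ one_ne_zero).smul hy.tendsto_sum_nat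
  refine hsc.mem_of_tendsto hcm ?_
  filter_upwards [hW.eventually (lt_mem_nhds one_pos)] with m hm
  exact hs.centerMass_mem (fun j _ => hw j) hm fun j _ => hz j

theorem norm_le_of_mem_closedConvexHull {E : Type*} [SeminormedAddCommGroup E]
    [NormedSpace ℝ E] {s : Set E} {M : ℝ} (hs : ∀ h ∈ s, ‖h‖ ≤ M) {h : E}
    (hh : h ∈ closedConvexHull ℝ s) : ‖h‖ ≤ M :=
  mem_closedBall_zero_iff.1 <|
    closedConvexHull_min (fun h hh => mem_closedBall_zero_iff.2 (hs h hh))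
      (convex_closedBall 0 M) Metric.isClosed_closedBall hh

end ConvexCombinations

theorem exists_seq_forall_of_forall_exists_sum {R M : Type*} [Semiring R] [AddCommMonoid M]
    [Module R M] (c : ℕ → R) {P : M → ℕ → M → Prop} (h : ∀ s n, ∃ v, P s n v) :
    ∃ u : ℕ → M, ∀ n, P (∑ k ∈ Finset.range n, c k • u k) n (u n) := by
  choose v hv using h
  let s : ℕ → M := fun n => Nat.rec 0 (fun n sn => sn + c n • v sn n) n
  have hs : ∀ n, s n = ∑ k ∈ Finset.range n, c k • v (s k) k := by
    intro n
    induction n with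
    | zero => rfl
    | succ n ih => rw [Finset.sum_range_succ, ← ih]
  exact ⟨fun n => v (s n) n, fun n => hs n ▸ hv _ _⟩

theorem exists_le_add_of_bddBelow {α : Type*} {s : Set α} {φ : α → ℝ} (hs : s.Nonempty)
    (hφ : BddBelow (φ '' s)) {δ : ℝ} (hδ : 0 < δ) : ∃ u ∈ s, ∀ v ∈ s, φ u ≤ φ v + δ := by
  obtain ⟨_, ⟨u, hu, rfl⟩, hlt⟩ :=
    exists_lt_of_csInf_lt (hs.image φ) (lt_add_of_pos_right (sInf (φ '' s)) hδ)
  exact ⟨u, hu, fun v hv => hlt.le.trans (add_le_add_left (csInf_le hφ ⟨v, hv, rfl⟩) δ)⟩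

theorem tendstoUniformlyOn_of_forall_abs_sub_le_one_div {α : Type*} {F : ℕ → α → ℝ}
    {f : α → ℝ} {s : Set α} (h : ∀ k, ∀ p ∈ s, |F k p - f p| ≤ 1 / (k + 1)) :
    TendstoUniformlyOn F f atTop s := by
  refine Metric.tendstoUniformlyOn_iff.2 fun δ hδ => ?_
  obtain ⟨K, hK⟩ := exists_nat_one_div_lt hδ
  filter_upwards [eventually_ge_atTop K] with k hk p hp
  rw [Real.dist_eq, abs_sub_comm]
  refine (h k p hp).trans_lt (lt_of_le_of_lt ?_ hK)
  gcongr

section Dyadic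

variable {E : Type*} [NormedAddCommGroup E] [NormedSpace ℝ E]

noncomputable def dyadicSum (u : ℕ → E) (n : ℕ) : E :=
  ∑ k ∈ Finset.range n, (2⁻¹ : ℝ) ^ (k + 1) • u k

noncomputable def dyadicTail (u : ℕ → E) (n : ℕ) : E :=
  ∑' j, (2⁻¹ : ℝ) ^ (j + 1) • u (j + n)

theorem hasSum_two_inv_pow_succ : HasSum (fun j : ℕ => (2⁻¹ : ℝ) ^ (j + 1)) 1 := by
  simpa [pow_succ] using hasSum_geometric_two.mul_right (2⁻¹ : ℝ)

variable [CompleteSpace E] {u : ℕ → E} {M : ℝ}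

theorem summable_two_inv_pow_succ_smul (hu : ∀ k, ‖u k‖ ≤ M) :
    Summable fun k => (2⁻¹ : ℝ) ^ (k + 1) • u k :=
  (hasSum_two_inv_pow_succ.summable.mul_right M).of_norm_bounded fun k => by
    rw [norm_smul, norm_pow, norm_inv, Real.norm_ofNat]
    exact mul_le_mul_of_nonneg_left (hu k) (by positivity)

theorem dyadicTail_zero_eq (hu : ∀ k, ‖u k‖ ≤ M) (n : ℕ) :
    dyadicTail u 0 = dyadicSum u n + (2⁻¹ : ℝ) ^ n • dyadicTail u n := by
  simp only [dyadicTail, dyadicSum, add_zero, ← tsum_const_smul'', smul_smul, ← pow_add]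
  rw [← (summable_two_inv_pow_succ_smul hu).sum_add_tsum_nat_add n]
  congr 2 with j
  ring_nf

theorem dyadicTail_mem {C : ℕ → Set E} (hC : Antitone C) (hconv : ∀ n, Convex ℝ (C n))
    (hcl : ∀ n, IsClosed (C n)) (hu : ∀ k, u k ∈ C k) (hM : ∀ k, ‖u k‖ ≤ M) (n : ℕ) :
    dyadicTail u n ∈ C n :=
  (hconv n).mem_of_hasSum (hcl n) (fun j => by positivity) hasSum_two_inv_pow_succ
    (fun j => hC (Nat.le_add_left n j) (hu (j + n)))
    (summable_two_inv_pow_succ_smul fun j => hM (j + n)).hasSum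

end Dyadic

section WeaklyCompact

variable {X : Type*} [NormedAddCommGroup X] [NormedSpace ℝ X] {L : Set X}

theorem apply_mem_of_mem_closedConvexHull {s : Set (StrongDual ℝ X)} {T : Set ℝ}
    (hT : Convex ℝ T) (hTc : IsClosed T) {p : X} (hs : ∀ h ∈ s, h p ∈ T)
    {h : StrongDual ℝ X} (hh : h ∈ closedConvexHull ℝ s) : h p ∈ T :=
  closedConvexHull_min (s := s) (t := (ContinuousLinearMap.apply ℝ ℝ p) ⁻¹' T) hs
    (hT.linear_preimage (ContinuousLinearMap.apply ℝ ℝ p).toLinearMap)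
    (hTc.preimage (ContinuousLinearMap.apply ℝ ℝ p).continuous) hh

theorem tendsto_apply_of_mem_closedConvexHull_Ici {f g : ℕ → StrongDual ℝ X} {p : X} {c : ℝ}
    (hf : Tendsto (fun n => f n p) atTop (𝓝 c))
    (hg : ∀ j, g j ∈ closedConvexHull ℝ (f '' Ici j)) :
    Tendsto (fun j => g j p) atTop (𝓝 c) := by
  refine Metric.nhds_basis_closedBall.tendsto_right_iff.2 fun δ hδ => ?_
  obtain ⟨K, hK⟩ := eventually_atTop.1 (Metric.nhds_basis_closedBall.tendsto_right_iff.1 hf δ hδ)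
  filter_upwards [eventually_ge_atTop K] with j hj
  exact apply_mem_of_mem_closedConvexHull (convex_closedBall c δ) Metric.isClosed_closedBall
    (by rintro _ ⟨k, hk, rfl⟩; exact hK k (hj.trans hk)) (hg j)

theorem exists_mem_abs_apply_sub_le_of_mem_closure (hL : Bornology.IsBounded L)
    {s : Set (StrongDual ℝ X)} {w : StrongDual ℝ X} (hw : w ∈ closure s) {ε : ℝ} (hε : 0 < ε) :
    ∃ h ∈ s, ∀ p ∈ L, |h p - w p| ≤ ε := by
  obtain ⟨R, hR0, hR⟩ := hL.exists_pos_norm_le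
  obtain ⟨h, hs, hd⟩ := Metric.mem_closure_iff.1 hw (ε / R) (by positivity)
  refine ⟨h, hs, fun p hp => ?_⟩
  calc |h p - w p| = ‖(h - w) p‖ := rfl
    _ ≤ ‖h - w‖ * ‖p‖ := (h - w).le_opNorm p
    _ ≤ ε / R * R := by
      rw [← dist_eq_norm, dist_comm]
      exact mul_le_mul hd.le (hR p hp) (norm_nonneg p) (by positivity)
    _ = ε := div_mul_cancel₀ ε hR0.ne'

theorem WStarTendsto.exists_norm_le [CompleteSpace X] {x : ℕ → StrongDual ℝ X}
    {g : StrongDual ℝ X} (hx : WStarTendsto x g) : ∃ M, ∀ n, ‖x n‖ ≤ M :=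
  banach_steinhaus fun p => by
    obtain ⟨C, hC⟩ := (hx p).norm.bddAbove_range
    exact ⟨C, fun n => hC ⟨n, rfl⟩⟩

theorem IsWeaklyCompact.isCompact_image (hL : IsWeaklyCompact L) (h : StrongDual ℝ X) :
    IsCompact (h '' L) := by
  have hc : Continuous fun w : WeakSpace ℝ X => h ((toWeakSpace ℝ X).symm w) :=
    WeakBilin.eval_continuous (topDualPairing ℝ X).flip h
  simpa only [image_image, LinearEquiv.symm_apply_apply] using hL.image hc

theorem IsWeaklyCompact.isBounded (hL : IsWeaklyCompact L) : Bornology.IsBounded L := by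
  obtain ⟨C, hC⟩ := banach_steinhaus (g := fun p : L => inclusionInDoubleDual ℝ X p) fun h => by
    obtain ⟨C, hC⟩ := isBounded_iff_forall_norm_le.1 (hL.isCompact_image h).isBounded
    exact ⟨C, fun p => hC _ ⟨p, p.2, rfl⟩⟩
  refine isBounded_iff_forall_norm_le.2 ⟨C, fun p hp => ?_⟩
  exact ((inclusionInDoubleDualLi ℝ (E := X)).norm_map p).symm.le.trans (hC ⟨p, hp⟩)

theorem IsWeaklyCompact.exists_forall_apply_le (hL : IsWeaklyCompact L) (hne : L.Nonempty)
    (h : StrongDual ℝ X) : ∃ b ∈ L, ∀ p ∈ L, h p ≤ h b := by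
  obtain ⟨_, ⟨b, hb, rfl⟩, hmax⟩ := (hL.isCompact_image h).exists_isGreatest (hne.image h)
  exact ⟨b, hb, fun p hp => hmax ⟨p, hp, rfl⟩⟩

noncomputable def supOn (L : Set X) (h : StrongDual ℝ X) : ℝ := sSup (h '' L)

theorem IsWeaklyCompact.le_supOn (hL : IsWeaklyCompact L) (h : StrongDual ℝ X) {p : X}
    (hp : p ∈ L) : h p ≤ supOn L h :=
  le_csSup (hL.isCompact_image h).bddAbove (mem_image_of_mem h hp)

theorem supOn_le (hne : L.Nonempty) {h : StrongDual ℝ X} {c : ℝ} (hc : ∀ p ∈ L, h p ≤ c) :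
    supOn L h ≤ c :=
  csSup_le (hne.image h) (forall_mem_image.2 hc)

theorem IsWeaklyCompact.bddBelow_supOn_image (hL : IsWeaklyCompact L) (hne : L.Nonempty)
    {C : Set (StrongDual ℝ X)} {R : ℝ} (hR : ∀ v ∈ C, ‖v‖ ≤ R) : BddBelow (supOn L '' C) := by
  obtain ⟨p, hp⟩ := hne
  refine ⟨-(R * ‖p‖), forall_mem_image.2 fun v hv => ?_⟩
  calc -(R * ‖p‖) ≤ -(‖v‖ * ‖p‖) := by gcongr; exact hR v hv
    _ ≤ v p := neg_le_of_abs_le (v.le_opNorm p)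
    _ ≤ supOn L v := hL.le_supOn v hp

theorem IsWeaklyCompact.exists_forall_supOn_add_smul_le (hL : IsWeaklyCompact L)
    (hne : L.Nonempty) {C : Set (StrongDual ℝ X)} (hC : C.Nonempty) {M : ℝ}
    (hM : ∀ v ∈ C, ‖v‖ ≤ M) (s : StrongDual ℝ X) (t : ℝ) {δ : ℝ} (hδ : 0 < δ) :
    ∃ u ∈ C, ∀ v ∈ C, supOn L (s + t • u) ≤ supOn L (s + t • v) + δ := by
  refine exists_le_add_of_bddBelow hC ?_ hδ
  rw [← image_image (supOn L) (fun v => s + t • v)]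
  refine hL.bddBelow_supOn_image hne (R := ‖s‖ + |t| * M) (forall_mem_image.2 fun v hv => ?_)
  refine (norm_add_le _ _).trans ?_
  rw [norm_smul, Real.norm_eq_abs]
  gcongr
  exact hM v hv

theorem simons_inequality (hL : IsWeaklyCompact L) (hne : L.Nonempty)
    {C : ℕ → Set (StrongDual ℝ X)} (hC : Antitone C) (hconv : ∀ n, Convex ℝ (C n))
    (hcl : ∀ n, IsClosed (C n)) (hCne : ∀ n, (C n).Nonempty) {M : ℝ}
    (hM : ∀ n, ∀ h ∈ C n, ‖h‖ ≤ M) {ε : ℝ} (hε : 0 < ε) :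
    ∃ w ∈ C 0, ∃ b ∈ L, (∀ p ∈ L, w p ≤ w b) ∧ ∀ n, ∃ z ∈ C n, w b - ε ≤ z b := by
  set r : ℝ := 2⁻¹
  -- `u n` nearly minimises `v ↦ supOn L (H n + rⁿ • v)` on `C n`; comparing with `v = z n` bounds
  -- `supOn L (H n)` by about `(1 - rⁿ) σ`, and evaluating `z 0 = H n + rⁿ • z n` at a maximiser `b`
  -- of `z 0` then forces `z n b ≥ z 0 b - ε`. The error `ε (rⁿ)² / 2` is what makes `hbound` close.
  have hnear : ∀ s n, ∃ u, u ∈ C n ∧ ∀ v ∈ C n,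
      supOn L (s + r ^ n • u) ≤ supOn L (s + r ^ n • v) + ε * (r ^ n) ^ 2 / 2 := fun s n =>
    hL.exists_forall_supOn_add_smul_le hne (hCne n) (hM n) s (r ^ n) (by positivity)
  obtain ⟨u, hu⟩ := exists_seq_forall_of_forall_exists_sum (fun k => r ^ (k + 1)) hnear
  have huM : ∀ k, ‖u k‖ ≤ M := fun k => hM k _ (hu k).1
  set H := dyadicSum u
  set z := dyadicTail u
  set σ := supOn L (z 0)
  have hz : ∀ n, z n ∈ C n := dyadicTail_mem hC hconv hcl (fun k => (hu k).1) huM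
  have hzH : ∀ n, z 0 = H n + r ^ n • z n := dyadicTail_zero_eq huM
  have hstep : ∀ n, supOn L (H (n + 1)) ≤
      2⁻¹ * supOn L (H n) + 2⁻¹ * (σ + ε * (r ^ n) ^ 2 / 2) := by
    intro n
    have hmin : supOn L (H n + r ^ n • u n) ≤ σ + ε * (r ^ n) ^ 2 / 2 :=
      calc supOn L (H n + r ^ n • u n) ≤ supOn L (H n + r ^ n • z n) + ε * (r ^ n) ^ 2 / 2 :=
            (hu n).2 (z n) (hz n)
        _ = σ + ε * (r ^ n) ^ 2 / 2 := by rw [← hzH n]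
    refine supOn_le hne fun p hp => ?_
    have hsplit : H (n + 1) p = 2⁻¹ * H n p + 2⁻¹ * (H n + r ^ n • u n) p := by
      simp only [H, dyadicSum, Finset.sum_range_succ, add_apply,
        smul_apply, smul_eq_mul, pow_succ, r]
      ring
    rw [hsplit]
    linear_combination (hL.le_supOn (H n) hp + (hL.le_supOn _ hp).trans hmin) / 2
  have hbound : ∀ n, supOn L (H n) ≤ (1 - r ^ n) * σ + ε * r ^ n * (1 - r ^ n) := by
    intro n
    induction n with
    | zero => simpa [H, dyadicSum] using supOn_le hne (h := 0) (c := 0) (by simp)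
    | succ n ih =>
      rw [pow_succ]
      linear_combination hstep n + ih / 2
  obtain ⟨b, hb, hmax⟩ := hL.exists_forall_apply_le hne (z 0)
  have hσ : σ = z 0 b := le_antisymm (supOn_le hne hmax) (hL.le_supOn _ hb)
  refine ⟨z 0, hz 0, b, hb, hmax, fun n => ⟨z n, hz n, ?_⟩⟩
  have hzb : z 0 b = H n b + r ^ n * z n b := by
    conv_lhs => rw [hzH n]
    simp
  have hq : 0 < r ^ n := by positivity
  have : r ^ n * (z 0 b - ε) ≤ r ^ n * z n b := by
    nlinarith [hσ, hzb, hbound n, hL.le_supOn (H n) hb, mul_nonneg hε.le (mul_nonneg hq.le hq.le)]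
  exact le_of_mul_le_mul_left this hq

variable {f : ℕ → StrongDual ℝ X} {M : ℝ}

theorem IsWeaklyCompact.exists_mem_closedConvexHull_le (hL : IsWeaklyCompact L)
    (hM : ∀ n, ‖f n‖ ≤ M) (hf : ∀ p ∈ L, Tendsto (fun n => f n p) atTop (𝓝 0)) (N : ℕ)
    {ε : ℝ} (hε : 0 < ε) : ∃ w ∈ closedConvexHull ℝ (f '' Ici N), ∀ p ∈ L, w p ≤ ε := by
  rcases L.eq_empty_or_nonempty with rfl | hne
  · exact ⟨f N, subset_closedConvexHull ⟨N, self_mem_Ici, rfl⟩, by simp⟩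
  obtain ⟨w, hw, b, hb, hmax, hz⟩ := simons_inequality hL hne
    (C := fun n => closedConvexHull ℝ (f '' Ici (N + n)))
    (fun m n hmn => (closedConvexHull ℝ).monotone (image_mono (Ici_subset_Ici.2 (by omega))))
    (fun _ => convex_closedConvexHull) (fun _ => isClosed_closedConvexHull)
    (fun n => ⟨f (N + n), subset_closedConvexHull ⟨N + n, self_mem_Ici, rfl⟩⟩)
    (fun n _ hh => norm_le_of_mem_closedConvexHull (forall_mem_image.2 fun k _ => hM k) hh) hε
  refine ⟨w, by simpa using hw, fun p hp => (hmax p hp).trans ?_⟩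
  refine le_of_forall_pos_le_add fun δ hδ => ?_
  obtain ⟨K, hK⟩ := eventually_atTop.1 ((hf b hb).eventually (Iic_mem_nhds hδ))
  obtain ⟨z, hzC, hzb⟩ := hz K
  have : z b ≤ δ := apply_mem_of_mem_closedConvexHull (convex_Iic δ) isClosed_Iic
    (forall_mem_image.2 fun k hk => hK k (le_of_add_le_right (mem_Ici.1 hk))) hzC
  linarith

theorem IsWeaklyCompact.exists_mem_closedConvexHull_abs_le (hL : IsWeaklyCompact L)
    (hM : ∀ n, ‖f n‖ ≤ M) (hf : ∀ p ∈ L, Tendsto (fun n => f n p) atTop (𝓝 0)) (N : ℕ)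
    {ε : ℝ} (hε : 0 < ε) : ∃ h ∈ closedConvexHull ℝ (f '' Ici N), ∀ p ∈ L, |h p| ≤ ε := by
  have hmono : ∀ {m n}, m ≤ n →
      closedConvexHull ℝ (f '' Ici n) ⊆ closedConvexHull ℝ (f '' Ici m) := fun hmn =>
    (closedConvexHull ℝ).monotone (image_mono (Ici_subset_Ici.2 hmn))
  choose g hg hgL using fun j => hL.exists_mem_closedConvexHull_le hM hf (N + j) hε
  -- the `g j` are `≤ ε` on `L` and tend to `0` there: the one-sided bound for `-g` adds `≥ -ε`
  obtain ⟨h, hh, hhL⟩ := hL.exists_mem_closedConvexHull_le (f := fun j => -g j) (M := M)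
    (fun j => by
      rw [norm_neg]
      exact norm_le_of_mem_closedConvexHull (forall_mem_image.2 fun k _ => hM k) (hg j))
    (fun p hp => by
      simpa using (tendsto_apply_of_mem_closedConvexHull_Ici (hf p hp)
        fun j => hmono (Nat.le_add_left j N) (hg j)).neg) 0 hε
  have hneg : closedConvexHull ℝ ((fun j => -g j) '' Ici 0) ⊆ -closedConvexHull ℝ (f '' Ici N) :=
    closedConvexHull_min
      (forall_mem_image.2 fun j _ => by simpa using hmono (Nat.le_add_right N j) (hg j))
      convex_closedConvexHull.neg isClosed_closedConvexHull.neg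
  refine ⟨-h, hneg hh, fun p hp => abs_le.2 ⟨?_, ?_⟩⟩
  · simpa using hhL p hp
  · have : h p ∈ Ici (-ε) := apply_mem_of_mem_closedConvexHull (convex_Ici (-ε)) isClosed_Ici
      (forall_mem_image.2 fun j _ => by simpa using hgL j p hp) hh
    simpa [neg_le] using this

theorem IsWeaklyCompact.exists_mem_convexHull_abs_sub_le (hL : IsWeaklyCompact L)
    {x : ℕ → StrongDual ℝ X} {g : StrongDual ℝ X} (hM : ∀ n, ‖x n‖ ≤ M)
    (hx : ∀ p ∈ L, Tendsto (fun n => x n p) atTop (𝓝 (g p))) (N : ℕ) {ε : ℝ} (hε : 0 < ε) :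
    ∃ y ∈ convexHull ℝ (x '' Ici N), ∀ p ∈ L, |y p - g p| ≤ ε := by
  obtain ⟨w, hw, hwL⟩ := hL.exists_mem_closedConvexHull_abs_le (f := fun n => x n - g)
    (fun n => (norm_sub_le _ _).trans (add_le_add_left (hM n) _))
    (fun p hp => by simpa using (hx p hp).sub_const (g p)) N (half_pos hε)
  rw [closedConvexHull_eq_closure_convexHull] at hw
  obtain ⟨h, hh, hhw⟩ := exists_mem_abs_apply_sub_le_of_mem_closure hL.isBounded hw (half_pos hε)
  have htrans : g +ᵥ (fun n => x n - g) '' Ici N = x '' Ici N := by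
    rw [← image_vadd, image_image]
    simp [vadd_eq_add]
  refine ⟨g + h, ?_, fun p hp => ?_⟩
  · rw [← htrans, convexHull_vadd]
    exact vadd_mem_vadd_set hh
  · have := abs_sub_abs_le_abs_sub (h p) (w p)
    simp only [add_apply, add_sub_cancel_left]
    linarith [hhw p hp, hwL p hp]

end WeaklyCompact

theorem convex_block_uniform_on_weakly_compact (X : Type*) [NormedAddCommGroup X]
    [NormedSpace ℝ X] [CompleteSpace X] (L : Set X) (hL : IsWeaklyCompact L)
    (x : ℕ → StrongDual ℝ X) (g : StrongDual ℝ X) (hx : WStarTendsto x g) :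
    ∃ y : ℕ → StrongDual ℝ X, IsConvexBlock x y ∧
      TendstoUniformlyOn (fun k p => y k p) (fun p => g p) atTop L := by
  obtain ⟨M, hM⟩ := hx.exists_norm_le
  have hblock : ∀ k n : ℕ, ∃ m > n, ∃ y ∈ convexHull ℝ (x '' Ico n m),
      ∀ p ∈ L, |y p - g p| ≤ 1 / (k + 1) := by
    intro k n
    obtain ⟨y, hy, hyL⟩ :=
      hL.exists_mem_convexHull_abs_sub_le hM (fun p _ => hx p) n Nat.one_div_pos_of_nat
    obtain ⟨m, hm, hym⟩ := exists_lt_mem_convexHull_image_Ico hy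
    exact ⟨m, hm, y, hym, hyL⟩
  choose m hm y hy hyL using hblock
  let N : ℕ → ℕ := fun k => Nat.rec 0 (fun k Nk => m k Nk) k
  refine ⟨fun k => y k (N k), isConvexBlock_of_mem_convexHull_Ico
    (strictMono_nat_of_lt_succ fun k => hm k (N k)) fun k => hy k (N k),
    tendstoUniformlyOn_of_forall_abs_sub_le_one_div fun k => hyL k (N k)⟩
end
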